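/- Let n ≥ 3 and g₁, …, gₙ be pairwise relatively prime nonzero univariate polynomials over ℂ, not all constant, and e₁, …, eₙ positive integers with g₁^{e₁} + g₂^{e₂} + ⋯ + gₙ^{eₙ} = 0. Suppose g₁^{e₁}, …, g_{n−1}^{e_{n−1}} are linearly independent over ℂ. Then 1/e₁ + 1/e₂ + ⋯ + 1/eₙ > 1/(n−2). -/

import Mathlib

/-!
Write `f i = g i ^ e i`, `r = n - 1`, and let `W` be the Wronskian of `f 0, …, f (r - 1)`, which
is nonzero because these are linearly independent. Every `g i ^ (e i - (r - 1))` divides `W`: it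
divides each entry of the row of `f i`, and for the last index one may replace any row by that of
`f (n - 1) = -∑ f i`, which only changes the sign of `W`. As the `g i` are pairwise coprime,
`deg W ≥ ∑ (e i - (r - 1)) deg g i`. On the other hand, the Wronskian of any `r` of the `f i`
(again `±W`) has degree at most the sum of their degrees minus `0 + 1 + ⋯ + (r - 1) ≥ 1`.
Comparing gives `e k deg g k < (n - 2) ∑ deg g i` for each `k`, and the claim follows by summing
`1 / e k > deg g k / ((n - 2) ∑ deg g i)`.
-/

open Polynomial Finset

theorem Matrix.dvd_det_of_forall_dvd {R n : Type*} [CommRing R] [Fintype n] [DecidableEq n]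
    {M : Matrix n n R} {c : R} (i : n) (h : ∀ j, c ∣ M i j) : c ∣ M.det := by
  choose q hq using h
  have hM : M = M.updateRow i (c • q) := by
    ext k j
    rcases eq_or_ne k i with rfl | hk
    · simp [← hq]
    · simp [hk]
  rw [hM, Matrix.det_updateRow_smul]
  exact dvd_mul_right _ _

namespace Polynomial

section CommRing

variable {R : Type*} [CommRing R] {r : ℕ}

noncomputable def wronskianMatrix (f : Fin r → R[X]) : Matrix (Fin r) (Fin r) R[X] :=
  Matrix.of fun i j => derivative^[j] (f i)

theorem natDegree_iterate_derivative_add_le {p : R[X]} {j : ℕ} (h : derivative^[j] p ≠ 0) :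
    (derivative^[j] p).natDegree + j ≤ p.natDegree := by
  have hj : j ≤ p.natDegree := by
    by_contra! hlt
    exact h (iterate_derivative_eq_zero hlt)
  have := natDegree_iterate_derivative p j
  omega

theorem natDegree_det_add_sum_le {N : Matrix (Fin r) (Fin r) R[X]} (D : Fin r → ℕ)
    (hN : ∀ i j, N i j ≠ 0 → (N i j).natDegree + j ≤ D i) (hdet : N.det ≠ 0) :
    N.det.natDegree + ∑ j : Fin r, (j : ℕ) ≤ ∑ i, D i := by
  have hterm : ∀ σ : Equiv.Perm (Fin r), ∏ i, N (σ i) i ≠ 0 →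
      (∏ i, N (σ i) i).natDegree + ∑ j : Fin r, (j : ℕ) ≤ ∑ i, D i := by
    intro σ hσ
    have hfac : ∀ i, N (σ i) i ≠ 0 := fun i h0 => hσ (prod_eq_zero (mem_univ i) h0)
    calc (∏ i, N (σ i) i).natDegree + ∑ j : Fin r, (j : ℕ)
        ≤ ∑ i, ((N (σ i) i).natDegree + i) := by
          rw [sum_add_distrib]; exact Nat.add_le_add_right (natDegree_prod_le _ _) _
      _ ≤ ∑ i, D (σ i) := sum_le_sum fun i _ => hN (σ i) i (hfac i)
      _ = ∑ i, D i := Equiv.sum_comp σ D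
  rw [Matrix.det_apply'] at hdet ⊢
  obtain ⟨σ, -, hσ⟩ := exists_ne_zero_of_sum_ne_zero hdet
  have hT := hterm σ (right_ne_zero_of_mul hσ)
  suffices (∑ σ : Equiv.Perm (Fin r), (Equiv.Perm.sign σ : R[X]) * ∏ i, N (σ i) i).natDegree
      ≤ ∑ i, D i - ∑ j : Fin r, (j : ℕ) by omega
  refine natDegree_sum_le_of_forall_le _ _ fun τ _ => (natDegree_mul_le).trans ?_
  rw [natDegree_intCast, zero_add]
  by_cases hτ : ∏ i, N (τ i) i = 0
  · simp [hτ]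
  · have := hterm τ hτ; omega

theorem natDegree_det_wronskianMatrix_add_sum_le {f : Fin r → R[X]}
    (h : (wronskianMatrix f).det ≠ 0) :
    (wronskianMatrix f).det.natDegree + ∑ j : Fin r, (j : ℕ) ≤ ∑ i, (f i).natDegree :=
  natDegree_det_add_sum_le _ (fun _ _ => natDegree_iterate_derivative_add_le) h

theorem pow_sub_dvd_det_wronskianMatrix {f : Fin r → R[X]} {g : R[X]} {e : ℕ} (i : Fin r)
    (hi : f i = g ^ e) : g ^ (e - (r - 1)) ∣ (wronskianMatrix f).det :=
  Matrix.dvd_det_of_forall_dvd i fun j => by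
    rw [wronskianMatrix, Matrix.of_apply, hi]
    exact (pow_dvd_pow g (by omega)).trans (pow_sub_dvd_iterate_derivative_pow g e j)

theorem det_wronskianMatrix_update {f : Fin r → R[X]} {p : R[X]} (h : p + ∑ i, f i = 0)
    (k : Fin r) :
    (wronskianMatrix (Function.update f k p)).det = -(wronskianMatrix f).det := by
  have hrow : wronskianMatrix (Function.update f k p) =
      (wronskianMatrix f).updateRow k (∑ i, (-1 : R[X]) • wronskianMatrix f i) := by
    ext i j
    rcases eq_or_ne i k with rfl | hi
    · simp [wronskianMatrix, eq_neg_of_add_eq_zero_left h, iterate_derivative_sum]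
    · simp [wronskianMatrix, hi]
  rw [hrow, Matrix.det_updateRow_sum (c := fun _ => -1)]
  simp

theorem pow_sub_dvd_det_wronskianMatrix_of_add_sum_eq_zero {f : Fin (r + 1) → R[X]}
    {p g : R[X]} {e : ℕ} (h : p + ∑ i, f i = 0) (hp : p = g ^ e) :
    g ^ (e - r) ∣ (wronskianMatrix f).det := by
  rw [← dvd_neg, ← det_wronskianMatrix_update h 0]
  exact pow_sub_dvd_det_wronskianMatrix 0 (by rw [Function.update_self, hp])

theorem natDegree_det_wronskianMatrix_add_le_of_add_sum_eq_zero {f : Fin r → R[X]} {p : R[X]}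
    (h : p + ∑ i, f i = 0) (hW : (wronskianMatrix f).det ≠ 0) (k : Fin r) :
    (wronskianMatrix f).det.natDegree + ∑ j : Fin r, (j : ℕ) + (f k).natDegree ≤
      ∑ i, (f i).natDegree + p.natDegree := by
  have hWk := det_wronskianMatrix_update h k
  have hbound := natDegree_det_wronskianMatrix_add_sum_le (hWk ▸ neg_ne_zero.mpr hW)
  rw [hWk, natDegree_neg] at hbound
  have hupd : ∑ i, (Function.update f k p i).natDegree + (f k).natDegree =
      ∑ i, (f i).natDegree + p.natDegree := by
    rw [sum_eq_sum_sdiff_singleton_add (mem_univ k) fun i => (f i).natDegree]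
    simp only [Function.apply_update (fun _ => natDegree), sum_update_of_mem (mem_univ k)]
    ring
  omega

theorem sum_derivative_mul_iterate_derivative_eq_zero {ι : Type*} {s : Finset ι}
    {c f : ι → R[X]} {j : ℕ} (h₀ : ∑ i ∈ s, c i * derivative^[j] (f i) = 0)
    (h₁ : ∑ i ∈ s, c i * derivative^[j + 1] (f i) = 0) :
    ∑ i ∈ s, derivative (c i) * derivative^[j] (f i) = 0 := by
  have := congrArg derivative h₀
  simp only [derivative_sum, derivative_mul, sum_add_distrib, derivative_zero,
    ← Function.iterate_succ_apply' derivative, h₁, add_zero] at this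
  exact this

theorem eq_zero_of_sum_mul_iterate_derivative_eq_zero [IsDomain R] {f c : Fin (r + 1) → R[X]}
    (hW : (wronskianMatrix fun i : Fin r => f i.castSucc).det ≠ 0) (hlast : c (Fin.last r) = 0)
    (hc : ∀ j : Fin r, ∑ i, c i * derivative^[j] (f i) = 0) : c = 0 := by
  have hinit : (fun i : Fin r => c i.castSucc) = 0 := by
    by_contra hne
    refine hW (Matrix.exists_vecMul_eq_zero_iff.mp ⟨_, hne, ?_⟩)
    funext j
    simpa [Matrix.vecMul, dotProduct, wronskianMatrix, Fin.sum_univ_castSucc, hlast] using hc j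
  funext i
  cases i using Fin.lastCases with
  | last => exact hlast
  | cast i => exact congrFun hinit i

end CommRing

section Field

variable {K : Type*} [Field K] [CharZero K] {r : ℕ}

theorem exists_C_mul_eq_of_wronskian_eq_zero {a b : K[X]} (ha : a ≠ 0) (h : wronskian a b = 0) :
    ∃ l : K, b = C l * a := by
  classical
  obtain ⟨a', b', hab, hbb, hu⟩ := extract_gcd a b
  set d := gcd a b
  have hd : d ≠ 0 := gcd_ne_zero_of_left ha
  rw [hab] at ha h ⊢
  rw [hbb] at h ⊢
  have hw : wronskian a' b' = 0 := by
    have : wronskian (d * a') (d * b') = d * d * wronskian a' b' := by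
      simp only [wronskian, derivative_mul]; ring
    simpa [this, hd] using h
  obtain ⟨ha', hb'⟩ := ((gcd_isUnit_iff _ _).mp hu).wronskian_eq_zero_iff.mp hw
  obtain ⟨α, rfl⟩ := natDegree_eq_zero.mp (derivative_eq_zero.mp ha')
  obtain ⟨β, rfl⟩ := natDegree_eq_zero.mp (derivative_eq_zero.mp hb')
  have hα : α ≠ 0 := by rintro rfl; simp at ha
  refine ⟨β / α, ?_⟩
  rw [mul_left_comm, ← C_mul, div_mul_cancel₀ _ hα]

theorem det_wronskianMatrix_ne_zero {f : Fin r → K[X]} (hf : LinearIndependent K f) :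
    (wronskianMatrix f).det ≠ 0 := by
  induction r with
  | zero => simp
  | succ r ih =>
    have hW := ih (hf.comp _ (Fin.castSucc_injective r))
    intro hdet
    obtain ⟨c, hc0, hc⟩ := Matrix.exists_vecMul_eq_zero_iff.mpr hdet
    have hrel (j : Fin (r + 1)) : ∑ i, c i * derivative^[j] (f i) = 0 := by
      simpa [Matrix.vecMul, dotProduct, wronskianMatrix] using congrFun hc j
    have hrel' (j : Fin r) : ∑ i, c i * derivative^[j] (f i) = 0 := hrel j.castSucc
    have hlast : c (Fin.last r) ≠ 0 := fun h =>
      hc0 (eq_zero_of_sum_mul_iterate_derivative_eq_zero hW h hrel')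
    -- The relations for `c` and for its derivative (`hder`) combine into relations for the
    -- Wronskians `W(c_last, c i)`; so these vanish, i.e. every `c i / c_last` is a constant.
    have hw : (fun i => wronskian (c (Fin.last r)) (c i)) = 0 := by
      refine eq_zero_of_sum_mul_iterate_derivative_eq_zero hW (wronskian_self_eq_zero _)
        fun j => ?_
      have hder := sum_derivative_mul_iterate_derivative_eq_zero (hrel j.castSucc) (hrel j.succ)
      simp only [Fin.val_castSucc] at hder
      simp only [wronskian, sub_mul, mul_assoc, sum_sub_distrib, ← mul_sum, hder, hrel' j,
        mul_zero, sub_zero]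
    choose l hl using fun i => exists_C_mul_eq_of_wronskian_eq_zero hlast (congrFun hw i)
    have hl0 : ∑ i, l i • f i = 0 := by
      have h0 : c (Fin.last r) * ∑ i, l i • f i = 0 := by
        rw [← hrel 0, mul_sum]
        refine sum_congr rfl fun i _ => ?_
        rw [hl i, smul_eq_C_mul]
        simp only [Fin.val_zero, Function.iterate_zero, id_eq]
        ring
      exact (mul_eq_zero.mp h0).resolve_left hlast
    apply hc0
    funext i
    rw [Pi.zero_apply, hl i, Fintype.linearIndependent_iff.mp hf l hl0 i, C_0, zero_mul]

theorem mul_natDegree_add_sum_le_of_sum_pow_eq_zero {g : Fin (r + 2) → K[X]}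
    {e : Fin (r + 2) → ℕ} (hne : ∀ i, g i ≠ 0)
    (hcop : Pairwise fun i j => IsCoprime (g i) (g j)) (hsum : ∑ i, g i ^ e i = 0)
    (hind : LinearIndependent K fun i : Fin (r + 1) => g i.castSucc ^ e i.castSucc)
    (k : Fin (r + 2)) :
    e k * (g k).natDegree + ∑ j : Fin (r + 1), (j : ℕ) ≤ r * ∑ i, (g i).natDegree := by
  set F : Fin (r + 1) → K[X] := fun i => g i.castSucc ^ e i.castSucc
  set p := g (Fin.last _) ^ e (Fin.last _)
  have hpF : p + ∑ i, F i = 0 := by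
    rw [add_comm, ← Fin.sum_univ_castSucc (f := fun i => g i ^ e i)]
    exact hsum
  set W := (wronskianMatrix F).det
  have hW : W ≠ 0 := det_wronskianMatrix_ne_zero hind
  have hdvd (i : Fin (r + 2)) : g i ^ (e i - r) ∣ W := by
    cases i using Fin.lastCases with
    | last => exact pow_sub_dvd_det_wronskianMatrix_of_add_sum_eq_zero hpF rfl
    | cast i => exact pow_sub_dvd_det_wronskianMatrix i rfl
  have hlow : ∑ i, (e i - r) * (g i).natDegree ≤ W.natDegree := by
    have := natDegree_le_of_dvd
      (Fintype.prod_dvd_of_coprime (fun i j hij => (hcop hij).pow) hdvd) hW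
    rw [natDegree_prod _ _ fun i _ => pow_ne_zero _ (hne i)] at this
    simpa only [natDegree_pow] using this
  have hup : W.natDegree + ∑ j : Fin (r + 1), (j : ℕ) + e k * (g k).natDegree ≤
      ∑ i, e i * (g i).natDegree := by
    have hF (i : Fin (r + 1)) : (F i).natDegree = e i.castSucc * (g i.castSucc).natDegree :=
      natDegree_pow _ _
    rw [Fin.sum_univ_castSucc (f := fun i => e i * (g i).natDegree)]
    cases k using Fin.lastCases with
    | last =>
      have : W.natDegree + _ ≤ _ := natDegree_det_wronskianMatrix_add_sum_le hW
      simp only [hF] at this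
      omega
    | cast k =>
      have := natDegree_det_wronskianMatrix_add_le_of_add_sum_eq_zero hpF hW k
      have hp : p.natDegree = e (Fin.last _) * (g (Fin.last _)).natDegree := natDegree_pow _ _
      simp only [hF, hp] at this
      omega
  have hsplit : ∑ i, e i * (g i).natDegree ≤
      ∑ i, (e i - r) * (g i).natDegree + r * ∑ i, (g i).natDegree := by
    rw [mul_sum, ← sum_add_distrib]
    exact sum_le_sum fun i _ => by rw [← add_mul]; exact Nat.mul_le_mul_right _ (by omega)
  omega

end Field

end Polynomial

theorem one_div_lt_sum_one_div_of_mul_lt {ι : Type*} [Fintype ι] {m : ℕ} {e d : ι → ℕ}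
    (he : ∀ i, 0 < e i) (hd : 0 < ∑ i, d i) (h : ∀ i, e i * d i < m * ∑ i, d i) :
    (1 : ℚ) / m < ∑ i, (1 : ℚ) / e i := by
  obtain ⟨k, hk⟩ := nonempty_of_sum_ne_zero hd.ne'
  have hm : (0 : ℚ) < m * ∑ i, (d i : ℚ) := by exact_mod_cast (h k).trans_le' (Nat.zero_le _)
  calc (1 : ℚ) / m = ∑ i, (d i : ℚ) / (m * ∑ i, (d i : ℚ)) := by
        rw [← sum_div, div_mul_cancel_right₀ (right_ne_zero_of_mul hm.ne'), one_div]
    _ < ∑ i, (1 : ℚ) / e i := sum_lt_sum_of_nonempty ⟨k, hk⟩ fun i _ => by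
        rw [div_lt_div_iff₀ hm (by exact_mod_cast he i), one_mul, mul_comm, ← Nat.cast_sum]
        exact_mod_cast h i

theorem stmt9 (n : ℕ) (hn : 3 ≤ n) (g : Fin n → ℂ[X]) (e : Fin n → ℕ)
    (hne : ∀ i, g i ≠ 0) (he : ∀ i, 0 < e i)
    (hcop : ∀ i j, i ≠ j → IsCoprime (g i) (g j))
    (hconst : ¬ ∀ i, (g i).natDegree = 0)
    (hsum : ∑ i, g i ^ e i = 0)
    (hind : LinearIndependent ℂ
      (fun i : Fin (n - 1) => g (Fin.castLE (Nat.sub_le n 1) i) ^ e (Fin.castLE (Nat.sub_le n 1) i))) :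
    (1 : ℚ) / ((n : ℚ) - 2) < ∑ i, (1 : ℚ) / (e i : ℚ) := by
  obtain ⟨r, rfl⟩ : ∃ r, n = r + 2 := ⟨n - 2, by omega⟩
  have hdeg : 0 < ∑ i, (g i).natDegree := by
    obtain ⟨i, hi⟩ := not_forall.mp hconst
    exact sum_pos' (fun _ _ => Nat.zero_le _) ⟨i, mem_univ i, Nat.pos_of_ne_zero hi⟩
  have hT : 0 < ∑ j : Fin (r + 1), (j : ℕ) :=
    sum_pos' (fun _ _ => Nat.zero_le _) ⟨⟨1, by omega⟩, mem_univ _, Nat.one_pos⟩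
  have hmason (k) : e k * (g k).natDegree < r * ∑ i, (g i).natDegree := by
    have := mul_natDegree_add_sum_le_of_sum_pow_eq_zero hne (fun i j hij => hcop i j hij) hsum
      hind k
    omega
  have := one_div_lt_sum_one_div_of_mul_lt he hdeg hmason
  push_cast
  simpa using this
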